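/- Consider a MOAPVC instance and let S be a set of abstract mobility offers containing exactly one offer of each demand. Then there exists a vehicle assignment s mapping each o ∈ S with cls o = some w to a vehicle s(o) ∈ φ⁻¹(w) such that any two distinct o, p ∈ S with s(o) = s(p) satisfy T_o ∩ T_p = ∅, if and only if for every vehicle class w ∈ W and every maximal clique K of the class conflict graph G^w, |S ∩ K| ≤ |φ⁻¹(w)|. -/

import Mathlib

/-- The class conflict graph `G^w` of a MOAPVC instance, a simple graph on
`Ō^w = {o | cls o = some w}`: distinct abstract offers of vehicle class `w` are adjacent
iff their absence intervals intersect. -/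
def clsGraph {W A : Type*} (cls : A → Option W) (a b : A → ℝ) (w : W) :
    SimpleGraph {o : A // cls o = some w} where
  Adj o o' := o ≠ o' ∧ (Set.Ico (a o.1) (b o.1) ∩ Set.Ico (a o'.1) (b o'.1)).Nonempty
  symm := ⟨by
    rintro o o' ⟨hne, h⟩
    exact ⟨hne.symm, by rwa [Set.inter_comm] at h⟩⟩
  loopless := ⟨fun o h => h.1 rfl⟩

/-- A maximal clique: a clique not properly contained in any other clique. -/
def IsMaxClique {α : Type*} (G : SimpleGraph α) (K : Set α) : Prop :=
  G.IsClique K ∧ ∀ K' : Set α, G.IsClique K' → K ⊆ K' → K' = K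

/-!
Offers sharing a vehicle must have disjoint intervals, so the selected offers of a clique of
`G^w` need pairwise distinct vehicles of class `w`.

Conversely, `G^w` is an interval graph, and interval graphs are perfect: colour the selected
offers greedily by increasing left endpoint. The earlier intervals meeting a new interval all
contain its left endpoint, so together with it they form a clique; extended to a maximal clique
of `G^w`, it has at most `|φ⁻¹(w)|` selected members, which leaves a vehicle free.
-/

open Finset Function

section IntervalGraph

variable {ι : Type*} {a b : ι → ℝ}

def intervalGraph (a b : ι → ℝ) : SimpleGraph ι where
  Adj i j := i ≠ j ∧ (Set.Ico (a i) (b i) ∩ Set.Ico (a j) (b j)).Nonempty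
  symm := ⟨fun _ _ ⟨hne, h⟩ => ⟨hne.symm, by rwa [Set.inter_comm]⟩⟩
  loopless := ⟨fun _ h => h.1 rfl⟩

theorem intervalGraph_isClique_of_forall_mem {s : Set ι} {t : ℝ}
    (h : ∀ i ∈ s, t ∈ Set.Ico (a i) (b i)) : (intervalGraph a b).IsClique s :=
  fun i hi j hj hij => ⟨hij, t, h i hi, h j hj⟩

theorem intervalGraph_left_mem_of_adj {i j : ι} (hij : (intervalGraph a b).Adj i j)
    (hle : a j ≤ a i) : a i ∈ Set.Ico (a j) (b j) := by
  obtain ⟨-, t, hti, htj⟩ := hij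
  exact ⟨hle, hti.1.trans_lt htj.2⟩

/-- Every interval meeting the one with the largest left endpoint contains that endpoint. -/
theorem intervalGraph_isClique_insert_neighbors {s : Set ι} {i : ι}
    (hmax : ∀ j ∈ s, a j ≤ a i) :
    (intervalGraph a b).IsClique (insert i {j ∈ s | (intervalGraph a b).Adj i j}) := by
  rw [SimpleGraph.isClique_insert]
  refine ⟨intervalGraph_isClique_of_forall_mem (t := a i) fun j hj => ?_, fun j hj _ => hj.2⟩
  exact intervalGraph_left_mem_of_adj hj.2 (hmax j hj.1)

theorem intervalGraph_isClique_image {κ : Type*} {f : κ → ι} {s : Set κ}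
    (hs : (intervalGraph (a ∘ f) (b ∘ f)).IsClique s) : (intervalGraph a b).IsClique (f '' s) := by
  rintro _ ⟨i, hi, rfl⟩ _ ⟨j, hj, rfl⟩ hne
  exact ⟨hne, (hs hi hj (ne_of_apply_ne f hne)).2⟩

theorem SimpleGraph.IsClique.card_le_of_cliqueFree {α : Type*} {G : SimpleGraph α} {n : ℕ}
    {t : Finset α} (h : G.CliqueFree (n + 1)) (ht : G.IsClique (t : Set α)) : #t ≤ n := by
  by_contra! hlt
  obtain ⟨u, hut, hu⟩ := exists_subset_card_eq (s := t) hlt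
  exact h u ⟨ht.subset (by simpa using hut), hu⟩

theorem intervalGraph_exists_coloring {V : Type*} [Nonempty V] (C : Finset V) (s : Finset ι)
    (hs : ∀ t ⊆ s, (intervalGraph a b).IsClique (t : Set ι) → #t ≤ #C) :
    ∃ f : ι → V, (∀ i ∈ s, f i ∈ C) ∧
      ∀ i ∈ s, ∀ j ∈ s, (intervalGraph a b).Adj i j → f i ≠ f j := by
  classical
  induction s using Finset.induction_on_max_value a with
  | empty => exact ⟨fun _ => Classical.arbitrary V, by simp, by simp⟩
  | insert i s hi hmax ih =>
    obtain ⟨f, hfC, hf⟩ := ih fun t hts => hs t (hts.trans (subset_insert i s))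
    set N := {j ∈ s | (intervalGraph a b).Adj i j}
    have hN : #N < #C := by
      have hclique := intervalGraph_isClique_insert_neighbors (b := b) (s := (s : Set ι)) hmax
      have := hs (insert i N) (insert_subset_insert i (filter_subset _ s))
        (by simpa [N] using hclique)
      rwa [card_insert_of_notMem fun h => hi (mem_filter.1 h).1] at this
    obtain ⟨c, hcC, hcN⟩ := exists_mem_notMem_of_card_lt_card (card_image_le.trans_lt hN)
    have hnew : ∀ j ∈ s, (intervalGraph a b).Adj i j → c ≠ f j := fun j hj hij hc =>
      hcN (mem_image.2 ⟨j, mem_filter.2 ⟨hj, hij⟩, hc.symm⟩)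
    have hne : ∀ j ∈ s, j ≠ i := fun j hj h => hi (h ▸ hj)
    refine ⟨update f i c, fun j hj => ?_, fun j hj k hk hjk => ?_⟩
    · rcases mem_insert.1 hj with rfl | hjs
      · simpa
      · simpa [hne j hjs] using hfC j hjs
    · rcases mem_insert.1 hj with rfl | hjs <;> rcases mem_insert.1 hk with rfl | hks
      · exact absurd hjk (SimpleGraph.irrefl _)
      · simpa [hne k hks] using hnew k hks hjk
      · simpa [hne j hjs] using (hnew j hjs hjk.symm).symm
      · simpa [hne j hjs, hne k hks] using hf j hjs k hks hjk

theorem intervalGraph_colorable_of_cliqueFree [Finite ι] {n : ℕ}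
    (h : (intervalGraph a b).CliqueFree (n + 1)) : (intervalGraph a b).Colorable n := by
  have := Fintype.ofFinite ι
  rcases n with _ | n
  · have := SimpleGraph.cliqueFree_one.1 h
    exact SimpleGraph.Colorable.of_isEmpty 0
  obtain ⟨f, -, hf⟩ := intervalGraph_exists_coloring (V := Fin (n + 1)) univ univ
    fun t _ ht => by simpa using ht.card_le_of_cliqueFree h
  exact ⟨SimpleGraph.Coloring.mk f fun hij => hf _ (mem_univ _) _ (mem_univ _) hij⟩

end IntervalGraph

theorem SimpleGraph.IsClique.exists_isMaxClique_superset {α : Type*} [Finite α]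
    {G : SimpleGraph α} {K : Set α} (hK : G.IsClique K) : ∃ K', K ⊆ K' ∧ IsMaxClique G K' := by
  obtain ⟨K', hKK', hmax⟩ := (Set.toFinite {K | G.IsClique K}).exists_le_maximal hK
  exact ⟨K', hKK', hmax.1, fun K'' hK'' hsub => (hmax.2 hK'' hsub).antisymm hsub⟩

section VehicleAssignment

variable {V W A : Type*} {φ : V → W} {cls : A → Option W} {a b : A → ℝ} {S : Set A}

def IsVehicleAssignment (φ : V → W) (cls : A → Option W) (a b : A → ℝ) (S : Set A)
    (sv : {o : A // o ∈ S ∧ (cls o).isSome} → V) : Prop :=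
  (∀ o : {o : A // o ∈ S ∧ (cls o).isSome}, ∀ w : W, cls o.1 = some w → φ (sv o) = w) ∧
  (∀ o p : {o : A // o ∈ S ∧ (cls o).isSome}, o ≠ p → sv o = sv p →
    Set.Ico (a o.1) (b o.1) ∩ Set.Ico (a p.1) (b p.1) = ∅)

theorem IsVehicleAssignment.ncard_inter_le [Finite V]
    {sv : {o : A // o ∈ S ∧ (cls o).isSome} → V} (hsv : IsVehicleAssignment φ cls a b S sv)
    {w : W} {K : Set {o : A // cls o = some w}} (hK : (clsGraph cls a b w).IsClique K) :
    (S ∩ Subtype.val '' K).ncard ≤ {v | φ v = w}.ncard := by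
  obtain ⟨hcls, hdisj⟩ := hsv
  have hsel : S ∩ Subtype.val '' K ⊆
      Set.range (Subtype.val : {o : A // o ∈ S ∧ (cls o).isSome} → A) := by
    rintro _ ⟨hS, x, -, rfl⟩
    exact ⟨⟨x.1, hS, by simp [x.2]⟩, rfl⟩
  rw [← Set.image_preimage_eq_of_subset hsel, Set.ncard_image_of_injective _ Subtype.val_injective]
  refine Set.ncard_le_ncard_of_injOn sv ?_ ?_
  · rintro o ⟨-, x, -, hx⟩
    exact hcls o w (hx ▸ x.2)
  · rintro o ⟨-, x, hx, hxo⟩ p ⟨-, y, hy, hyp⟩ hop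
    by_contra hne
    have hxy : x ≠ y := fun h => hne (Subtype.ext (hxo ▸ hyp ▸ congrArg Subtype.val h))
    obtain ⟨-, hmeet⟩ := hK hx hy hxy
    rw [hxo, hyp, hdisj o p hne hop] at hmeet
    exact Set.not_nonempty_empty hmeet

theorem clsGraph_eq_intervalGraph (w : W) :
    clsGraph cls a b w = intervalGraph (fun o => a o.1) (fun o => b o.1) := rfl

def selectedClsGraph (cls : A → Option W) (a b : A → ℝ) (S : Set A) (w : W) :
    SimpleGraph {o : A // o ∈ S ∧ cls o = some w} :=
  intervalGraph (fun o => a o.1) (fun o => b o.1)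

theorem selectedClsGraph_cliqueFree [Finite A] {w : W} {n : ℕ}
    (h : ∀ K, IsMaxClique (clsGraph cls a b w) K → (S ∩ Subtype.val '' K).ncard ≤ n) :
    (selectedClsGraph cls a b S w).CliqueFree (n + 1) := by
  intro t ht
  rw [clsGraph_eq_intervalGraph] at h
  let e : {o : A // o ∈ S ∧ cls o = some w} → {o : A // cls o = some w} := fun o => ⟨o.1, o.2.2⟩
  obtain ⟨K, hK, hmax⟩ := (intervalGraph_isClique_image
    (a := fun o : {o : A // cls o = some w} => a o.1) (b := fun o => b o.1) (f := e)
    ht.1).exists_isMaxClique_superset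
  have hsub : Subtype.val '' (t : Set {o : A // o ∈ S ∧ cls o = some w}) ⊆
      S ∩ Subtype.val '' K := by
    rintro _ ⟨o, ho, rfl⟩
    exact ⟨o.2.1, e o, hK ⟨o, ho, rfl⟩, rfl⟩
  have := (Set.ncard_le_ncard hsub).trans (h K hmax)
  rw [Set.ncard_image_of_injective _ Subtype.val_injective, Set.ncard_coe_finset, ht.2] at this
  omega

theorem selectedClsGraph_exists_coloring [Finite V] [Finite A] {w : W}
    (h : ∀ K, IsMaxClique (clsGraph cls a b w) K →
      (S ∩ Subtype.val '' K).ncard ≤ {v | φ v = w}.ncard) :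
    ∃ c : {o : A // o ∈ S ∧ cls o = some w} → V, (∀ o, φ (c o) = w) ∧
      ∀ o p, (selectedClsGraph cls a b S w).Adj o p → c o ≠ c p := by
  obtain ⟨col⟩ := intervalGraph_colorable_of_cliqueFree (selectedClsGraph_cliqueFree h)
  let e := Finite.equivFinOfCardEq (Nat.card_coe_set_eq {v | φ v = w})
  exact ⟨fun o => (e.symm (col o)).1, fun o => (e.symm (col o)).2,
    fun o p hop h => col.valid hop (e.symm.injective (Subtype.ext h))⟩

theorem exists_isVehicleAssignment [Finite V] [Finite A]
    (h : ∀ w K, IsMaxClique (clsGraph cls a b w) K →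
      (S ∩ Subtype.val '' K).ncard ≤ {v | φ v = w}.ncard) :
    ∃ sv, IsVehicleAssignment φ cls a b S sv := by
  choose c hcφ hcadj using fun w => selectedClsGraph_exists_coloring (h w)
  let sv : {o : A // o ∈ S ∧ (cls o).isSome} → V :=
    fun o => c _ ⟨o.1, o.2.1, (Option.some_get o.2.2).symm⟩
  have hsv : ∀ o w (hw : cls o.1 = some w), sv o = c w ⟨o.1, o.2.1, hw⟩ := by
    intro o w hw
    obtain rfl : (cls o.1).get o.2.2 = w := Option.get_of_eq_some _ hw
    rfl
  refine ⟨sv, fun o w hw => by rw [hsv o w hw, hcφ], fun o p hne hop => ?_⟩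
  obtain ⟨w, hw⟩ := Option.isSome_iff_exists.1 o.2.2
  obtain ⟨w', hw'⟩ := Option.isSome_iff_exists.1 p.2.2
  rw [hsv o w hw, hsv p w' hw'] at hop
  obtain rfl : w = w' := (hcφ w _).symm.trans (hop ▸ hcφ w' _)
  by_contra hmeet
  exact hcadj w _ _ ⟨fun h => hne (Subtype.ext (Subtype.mk.inj h)),
    Set.nonempty_iff_ne_empty.2 hmeet⟩ hop

end VehicleAssignment

theorem moapvc_assignable_iff_maxClique_card_le_general {V W A : Type*}
    [Fintype V] [Fintype A]
    (φ : V → W) (cls : A → Option W) (a b : A → ℝ)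
    (S : Set A) :
    (∃ sv : {o : A // o ∈ S ∧ (cls o).isSome} → V,
        (∀ o : {o : A // o ∈ S ∧ (cls o).isSome}, ∀ w : W,
          cls o.1 = some w → φ (sv o) = w) ∧
        (∀ o p : {o : A // o ∈ S ∧ (cls o).isSome}, o ≠ p → sv o = sv p →
          Set.Ico (a o.1) (b o.1) ∩ Set.Ico (a p.1) (b p.1) = ∅)) ↔
    (∀ w : W, ∀ K : Set {o : A // cls o = some w},
        IsMaxClique (clsGraph cls a b w) K →
        (S ∩ Subtype.val '' K).ncard ≤ {v : V | φ v = w}.ncard) :=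
  ⟨fun ⟨_, hsv⟩ _ _ hK => IsVehicleAssignment.ncard_inter_le hsv hK.1, exists_isVehicleAssignment⟩

/-- For a MOAPVC instance and a set `S` of abstract offers containing exactly one offer of
each demand, there is an assignment of each selected offer of vehicle class `w` to an
individual vehicle of `φ⁻¹(w)` such that distinct offers assigned to the same vehicle have
disjoint absence intervals, iff for every vehicle class `w` and every maximal clique `K` of
the class conflict graph `G^w` we have `|S ∩ K| ≤ |φ⁻¹(w)|`. -/
theorem moapvc_assignable_iff_maxClique_card_le {D V W A : Type*}
    [Fintype D] [Fintype V] [Fintype W] [Fintype A]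
    (φ : V → W) (dem : A → D) (cls : A → Option W) (a b : A → ℝ)
    (hab : ∀ o, a o < b o) (hdem : ∀ d : D, ∃ o, dem o = d)
    (S : Set A) (hS : ∀ d : D, ∃! o, o ∈ S ∧ dem o = d) :
    (∃ sv : {o : A // o ∈ S ∧ (cls o).isSome} → V,
        (∀ o : {o : A // o ∈ S ∧ (cls o).isSome}, ∀ w : W,
          cls o.1 = some w → φ (sv o) = w) ∧
        (∀ o p : {o : A // o ∈ S ∧ (cls o).isSome}, o ≠ p → sv o = sv p →
          Set.Ico (a o.1) (b o.1) ∩ Set.Ico (a p.1) (b p.1) = ∅)) ↔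
    (∀ w : W, ∀ K : Set {o : A // cls o = some w},
        IsMaxClique (clsGraph cls a b w) K →
        (S ∩ Subtype.val '' K).ncard ≤ {v : V | φ v = w}.ncard) :=
  moapvc_assignable_iff_maxClique_card_le_general φ cls a b S
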